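/- arXiv:2105.08786 — 5 statements merged into one kernel-verified Lean document; each statement's English description precedes it below -/
import Mathlib

section
/- Let S be a finite set, P : S → PMF(S), f : S → ℕ, and let λ be a finitely supported PMF on S × ℕ that is invariant for the extended kernel κ. Then the total λ-probability of the set {(s, m) : f(s) > m} equals the total λ-probability of the set {(s, m) : f(s) < m}; that is, under the invariant distribution, upward mass adjustments and downward mass adjustments occur with equal probability. -/
/-- The myopic adjustment rule: move mass one step toward the current challenge. -/
def adjust (m d : ℕ) : ℕ := if m < d then m + 1 else if d < m then m - 1 else m

/-- The extended kernel on `S × ℕ`: the environment state moves according to `P`,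
and the mass updates deterministically to `adjust m (f s)`. -/
noncomputable def extKernel {S : Type*} (P : S → PMF S) (f : S → ℕ) : S × ℕ → PMF (S × ℕ) :=
  fun p => (P p.1).map (fun s' => (s', adjust p.2 (f p.1)))

open scoped ENNReal

/-- Expectation of `h` under a mapped PMF. -/
lemma tsum_map_mul {α β : Type*} (μ : PMF α) (φ : α → β) (h : β → ℝ≥0∞) :
    ∑' b, (μ.map φ) b * h b = ∑' a, μ a * h (φ a) := by
  classical
  simp only [PMF.map_apply, ENNReal.tsum_mul_right.symm, ite_mul, zero_mul]
  rw [ENNReal.tsum_comm]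
  refine tsum_congr fun a => ?_
  rw [tsum_eq_single (φ a) (by intro b hb; simp [hb])]
  simp

/-- Expectation of `h` under a bound PMF. -/
lemma tsum_bind_mul {α β : Type*} (μ : PMF α) (κ : α → PMF β) (h : β → ℝ≥0∞) :
    ∑' b, (μ.bind κ) b * h b = ∑' a, μ a * ∑' b, (κ a) b * h b := by
  simp only [PMF.bind_apply, ENNReal.tsum_mul_right.symm]
  rw [ENNReal.tsum_comm]
  refine tsum_congr fun a => ?_
  rw [← ENNReal.tsum_mul_left]
  exact tsum_congr fun b => (mul_assoc _ _ _)

/-- Under any finitely supported invariant distribution of the extended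
kernel, upward adjustments (`f s > m`) and downward adjustments (`f s < m`) have
equal probability. -/
theorem up_down_balance {S : Type*} [Fintype S] (P : S → PMF S) (f : S → ℕ)
    (lam : PMF (S × ℕ)) (hfin : lam.support.Finite)
    (hinv : lam.bind (extKernel P f) = lam) :
    lam.toOuterMeasure {p : S × ℕ | p.2 < f p.1} =
      lam.toOuterMeasure {p : S × ℕ | f p.1 < p.2} := by
  classical
  set M : ℝ≥0∞ := ∑' p : S × ℕ, lam p * (p.2 : ℝ≥0∞) with hM_def
  have hM : M ≠ ⊤ := by
    rw [hM_def, tsum_eq_sum (s := hfin.toFinset) (by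
      intro p hp
      rw [Set.Finite.mem_toFinset, PMF.mem_support_iff, not_not] at hp
      rw [hp, zero_mul])]
    exact (ENNReal.sum_lt_top.2 fun p _ =>
      ENNReal.mul_lt_top (PMF.apply_ne_top lam p).lt_top (ENNReal.natCast_ne_top _).lt_top).ne
  have key : ∑' q : S × ℕ, lam q * ((adjust q.2 (f q.1) : ℕ) : ℝ≥0∞) = M := by
    conv_rhs => rw [hM_def, ← hinv]
    rw [tsum_bind_mul]
    refine (tsum_congr fun q => ?_).symm
    rw [show extKernel P f q = (P q.1).map (fun s' => (s', adjust q.2 (f q.1))) from rfl,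
      tsum_map_mul]
    simp [ENNReal.tsum_mul_right, PMF.tsum_coe, -tsum_fintype]
  have pnat : ∀ m d : ℕ, adjust m d + (if d < m then 1 else 0)
      = m + (if m < d then 1 else 0) := by
    intro m d; unfold adjust; split_ifs <;> omega
  have point : ∀ m d : ℕ, ((adjust m d : ℕ) : ℝ≥0∞) + (if d < m then 1 else 0)
      = (m : ℝ≥0∞) + (if m < d then 1 else 0) := by
    intro m d
    exact_mod_cast congrArg (fun n : ℕ => (n : ℝ≥0∞)) (pnat m d)
  have hsum : (∑' q : S × ℕ, lam q * ((adjust q.2 (f q.1) : ℕ) : ℝ≥0∞))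
        + ∑' q : S × ℕ, lam q * (if f q.1 < q.2 then 1 else 0)
      = M + ∑' q : S × ℕ, lam q * (if q.2 < f q.1 then 1 else 0) := by
    rw [hM_def, ← ENNReal.tsum_add, ← ENNReal.tsum_add]
    refine tsum_congr fun q => ?_
    rw [← mul_add, ← mul_add, point q.2 (f q.1)]
  rw [key] at hsum
  have hUD := (ENNReal.add_right_inj hM).mp hsum
  rw [PMF.toOuterMeasure_apply, PMF.toOuterMeasure_apply]
  calc ∑' p, Set.indicator {p : S × ℕ | p.2 < f p.1} lam p
      = ∑' q : S × ℕ, lam q * (if q.2 < f q.1 then 1 else 0) := by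
        refine tsum_congr fun q => ?_
        by_cases h : q.2 < f q.1 <;> simp [Set.indicator, h]
    _ = ∑' q : S × ℕ, lam q * (if f q.1 < q.2 then 1 else 0) := hUD.symm
    _ = ∑' p, Set.indicator {p : S × ℕ | f p.1 < p.2} lam p := by
        refine tsum_congr fun q => ?_
        by_cases h : f q.1 < q.2 <;> simp [Set.indicator, h]
end

section
/- Let S be a finite set, P : S → PMF(S), f : S → ℕ, let μ ≥ 1 be an integer, and let λ be a finitely supported PMF on S × ℕ that is invariant for the extended kernel κ and satisfies ∑_{(s,m)} λ(s,m)·f(s) ≤ μ. Then the expected mass satisfies ∑_{(s,m)} λ(s,m)·m ≤ 2μ. -/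
/-- Expectation of a function of the second coordinate under a pushforward by `s' ↦ (s', c)`. -/
lemma exp_map_const {S : Type*} (ν : PMF S) (c : ℕ) (H : ℕ → ENNReal) :
    ∑' q : S × ℕ, (ν.map (fun s' => (s', c))) q * H q.2 = H c := by
  have h1 : ∀ q : S × ℕ, (ν.map (fun s' => (s', c))) q * H q.2
      = (ν.map (fun s' => (s', c))) q * H c := by
    intro q
    by_cases h : (ν.map (fun s' => (s', c))) q = 0
    · rw [h, zero_mul, zero_mul]
    · have hq : q ∈ (ν.map (fun s' => (s', c))).support := (PMF.mem_support_iff _ _).mpr h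
      rw [PMF.support_map] at hq
      obtain ⟨s', -, rfl⟩ := hq
      rfl
  rw [tsum_congr h1, ENNReal.tsum_mul_right, PMF.tsum_coe, one_mul]

/-- Invariance transfers expectations of functions of the mass coordinate. -/
lemma exp_inv {S : Type*} (P : S → PMF S) (f : S → ℕ) (lam : PMF (S × ℕ))
    (hinv : lam.bind (extKernel P f) = lam) (H : ℕ → ENNReal) :
    ∑' p : S × ℕ, lam p * H (adjust p.2 (f p.1)) = ∑' p : S × ℕ, lam p * H p.2 := by
  conv_rhs => rw [← hinv]
  calc ∑' p : S × ℕ, lam p * H (adjust p.2 (f p.1))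
      = ∑' p : S × ℕ, ∑' q : S × ℕ, lam p * (extKernel P f p q * H q.2) := by
        refine tsum_congr fun p => ?_
        rw [ENNReal.tsum_mul_left]
        congr 1
        have : extKernel P f p = (P p.1).map (fun s' => (s', adjust p.2 (f p.1))) := rfl
        rw [this, exp_map_const]
    _ = ∑' q : S × ℕ, ∑' p : S × ℕ, lam p * (extKernel P f p q * H q.2) :=
        ENNReal.tsum_comm
    _ = ∑' q : S × ℕ, (lam.bind (extKernel P f)) q * H q.2 := by
        refine tsum_congr fun q => ?_
        rw [PMF.bind_apply, ← ENNReal.tsum_mul_right]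
        exact tsum_congr fun p => (mul_assoc _ _ _).symm

/-- Step 3 of Proposition 1: if expected intensity is at most `μ`,
then the myopic agent's expected long-run mass is at most `2μ`. -/
theorem average_mass_bound {S : Type*} [Fintype S] (P : S → PMF S) (f : S → ℕ)
    (μ : ℕ) (hμ : 1 ≤ μ)
    (lam : PMF (S × ℕ)) (hfin : lam.support.Finite)
    (hinv : lam.bind (extKernel P f) = lam)
    (hfeas : ∑' p : S × ℕ, lam p * (f p.1 : ENNReal) ≤ (μ : ENNReal)) :
    ∑' p : S × ℕ, lam p * (p.2 : ENNReal) ≤ 2 * (μ : ENNReal) := by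
  classical
  set T : Finset (S × ℕ) := hfin.toFinset with hT
  have hz : ∀ p ∉ T, lam p = 0 := by
    intro p hp
    by_contra h
    exact hp (hfin.mem_toFinset.mpr ((lam.mem_support_iff p).mpr h))
  -- convert tsums over any weight to finite sums
  have hsum : ∀ g : S × ℕ → ENNReal,
      ∑' p : S × ℕ, lam p * g p = ∑ p ∈ T, lam p * g p := by
    intro g
    exact tsum_eq_sum (fun p hp => by rw [hz p hp, zero_mul])
  -- nat-valued indicators
  set lt : S × ℕ → ℕ := fun p => if p.2 < f p.1 then 1 else 0 with hlt
  set gt : S × ℕ → ℕ := fun p => if f p.1 < p.2 then 1 else 0 with hgt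
  set eqi : S × ℕ → ℕ := fun p => if p.2 = f p.1 then 1 else 0 with heqi
  -- helper: sums of nat-valued functions
  have sum_add : ∀ u v : S × ℕ → ℕ,
      (∑ p ∈ T, lam p * ((u p + v p : ℕ) : ENNReal))
        = (∑ p ∈ T, lam p * (u p : ENNReal)) + ∑ p ∈ T, lam p * (v p : ENNReal) := by
    intro u v
    rw [← Finset.sum_add_distrib]
    refine Finset.sum_congr rfl fun p _ => ?_
    push_cast
    ring
  have hfin1 : ∀ u : S × ℕ → ℕ, (∑ p ∈ T, lam p * ((u p : ℕ) : ENNReal)) ≠ ⊤ := by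
    intro u
    refine (ENNReal.sum_lt_top.mpr fun p _ => ?_).ne
    exact lt_of_le_of_ne le_top (ENNReal.mul_ne_top (lam.apply_ne_top p) (ENNReal.natCast_ne_top _))
  -- invariance of first "moment" identity : adjust + gt = m + lt (as naturals)
  have nat1 : ∀ p : S × ℕ, adjust p.2 (f p.1) + gt p = p.2 + lt p := by
    intro p
    simp only [hlt, hgt, adjust]
    split_ifs <;> omega
  have nat2 : ∀ p : S × ℕ,
      (adjust p.2 (f p.1)) ^ 2 + 2 * p.2 * gt p = p.2 ^ 2 + (2 * p.2 + 1) * lt p + gt p := by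
    intro p
    obtain ⟨s, m⟩ := p
    simp only [hlt, hgt, adjust]
    rcases lt_trichotomy m (f s) with h | h | h
    · rw [if_pos h, if_pos h, if_neg (by omega : ¬ f s < m)]
      ring
    · rw [if_neg (by omega : ¬ m < f s), if_neg (by omega : ¬ m < f s),
        if_neg (by omega : ¬ f s < m), if_neg (by omega : ¬ f s < m)]
      ring
    · obtain ⟨k, hk⟩ : ∃ k, m = k + 1 := ⟨m - 1, by omega⟩
      subst hk
      rw [if_neg (by omega : ¬ k + 1 < f s), if_neg (by omega : ¬ k + 1 < f s),
        if_pos h, if_pos h]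
      simp
      ring
  -- key equalities at the level of finite sums
  have inv1 : (∑ p ∈ T, lam p * ((adjust p.2 (f p.1) : ℕ) : ENNReal))
      = ∑ p ∈ T, lam p * ((p.2 : ℕ) : ENNReal) := by
    rw [← hsum fun p => ((adjust p.2 (f p.1) : ℕ) : ENNReal), ← hsum fun p => ((p.2 : ℕ) : ENNReal)]
    exact exp_inv P f lam hinv (fun n => (n : ENNReal))
  have inv2 : (∑ p ∈ T, lam p * (((adjust p.2 (f p.1)) ^ 2 : ℕ) : ENNReal))
      = ∑ p ∈ T, lam p * ((p.2 ^ 2 : ℕ) : ENNReal) := by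
    rw [← hsum fun p => (((adjust p.2 (f p.1)) ^ 2 : ℕ) : ENNReal),
      ← hsum fun p => ((p.2 ^ 2 : ℕ) : ENNReal)]
    exact exp_inv P f lam hinv (fun n => ((n ^ 2 : ℕ) : ENNReal))
  -- P = Q
  have key1 : (∑ p ∈ T, lam p * ((gt p : ℕ) : ENNReal))
      = ∑ p ∈ T, lam p * ((lt p : ℕ) : ENNReal) := by
    have h1 : (∑ p ∈ T, lam p * ((p.2 : ℕ) : ENNReal))
        + (∑ p ∈ T, lam p * ((gt p : ℕ) : ENNReal))
        = (∑ p ∈ T, lam p * ((p.2 : ℕ) : ENNReal))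
        + ∑ p ∈ T, lam p * ((lt p : ℕ) : ENNReal) := by
      calc (∑ p ∈ T, lam p * ((p.2 : ℕ) : ENNReal))
            + (∑ p ∈ T, lam p * ((gt p : ℕ) : ENNReal))
          = (∑ p ∈ T, lam p * ((adjust p.2 (f p.1) : ℕ) : ENNReal))
            + (∑ p ∈ T, lam p * ((gt p : ℕ) : ENNReal)) := by rw [inv1]
        _ = ∑ p ∈ T, lam p * ((adjust p.2 (f p.1) + gt p : ℕ) : ENNReal) :=
            (sum_add _ _).symm
        _ = ∑ p ∈ T, lam p * ((p.2 + lt p : ℕ) : ENNReal) :=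
            Finset.sum_congr rfl fun p _ => by rw [nat1 p]
        _ = (∑ p ∈ T, lam p * ((p.2 : ℕ) : ENNReal))
            + ∑ p ∈ T, lam p * ((lt p : ℕ) : ENNReal) := sum_add _ _
    exact (ENNReal.add_right_inj (hfin1 fun p => p.2)).mp h1
  -- 2B = 2A + P + Q
  have key2 : (∑ p ∈ T, lam p * ((2 * p.2 * gt p : ℕ) : ENNReal))
      = (∑ p ∈ T, lam p * (((2 * p.2 + 1) * lt p : ℕ) : ENNReal))
        + ∑ p ∈ T, lam p * ((gt p : ℕ) : ENNReal) := by
    have h1 : (∑ p ∈ T, lam p * ((p.2 ^ 2 : ℕ) : ENNReal))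
        + (∑ p ∈ T, lam p * ((2 * p.2 * gt p : ℕ) : ENNReal))
        = (∑ p ∈ T, lam p * ((p.2 ^ 2 : ℕ) : ENNReal))
        + ((∑ p ∈ T, lam p * (((2 * p.2 + 1) * lt p : ℕ) : ENNReal))
          + ∑ p ∈ T, lam p * ((gt p : ℕ) : ENNReal)) := by
      calc (∑ p ∈ T, lam p * ((p.2 ^ 2 : ℕ) : ENNReal))
            + (∑ p ∈ T, lam p * ((2 * p.2 * gt p : ℕ) : ENNReal))
          = (∑ p ∈ T, lam p * (((adjust p.2 (f p.1)) ^ 2 : ℕ) : ENNReal))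
            + (∑ p ∈ T, lam p * ((2 * p.2 * gt p : ℕ) : ENNReal)) := by rw [inv2]
        _ = ∑ p ∈ T, lam p * (((adjust p.2 (f p.1)) ^ 2 + 2 * p.2 * gt p : ℕ) : ENNReal) :=
            (sum_add _ _).symm
        _ = ∑ p ∈ T, lam p * ((p.2 ^ 2 + (2 * p.2 + 1) * lt p + gt p : ℕ) : ENNReal) :=
            Finset.sum_congr rfl fun p _ => by rw [nat2 p]
        _ = (∑ p ∈ T, lam p * ((p.2 ^ 2 + (2 * p.2 + 1) * lt p : ℕ) : ENNReal))
            + ∑ p ∈ T, lam p * ((gt p : ℕ) : ENNReal) := sum_add _ _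
        _ = ((∑ p ∈ T, lam p * ((p.2 ^ 2 : ℕ) : ENNReal))
            + (∑ p ∈ T, lam p * (((2 * p.2 + 1) * lt p : ℕ) : ENNReal)))
            + ∑ p ∈ T, lam p * ((gt p : ℕ) : ENNReal) := by rw [sum_add]
        _ = (∑ p ∈ T, lam p * ((p.2 ^ 2 : ℕ) : ENNReal))
            + ((∑ p ∈ T, lam p * (((2 * p.2 + 1) * lt p : ℕ) : ENNReal))
            + ∑ p ∈ T, lam p * ((gt p : ℕ) : ENNReal)) := add_assoc _ _ _
    exact (ENNReal.add_right_inj (hfin1 fun p => p.2 ^ 2)).mp h1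
  -- now bound 2 * E[m]
  have main2 : 2 * (∑ p ∈ T, lam p * ((p.2 : ℕ) : ENNReal))
      ≤ 2 * (2 * (μ : ENNReal)) := by
    have decomp : 2 * (∑ p ∈ T, lam p * ((p.2 : ℕ) : ENNReal))
        = (∑ p ∈ T, lam p * ((2 * p.2 * lt p + 2 * p.2 * eqi p : ℕ) : ENNReal))
          + ∑ p ∈ T, lam p * ((2 * p.2 * gt p : ℕ) : ENNReal) := by
      rw [← sum_add, Finset.mul_sum]
      refine Finset.sum_congr rfl fun p _ => ?_
      have hn : 2 * p.2 * lt p + 2 * p.2 * eqi p + 2 * p.2 * gt p = 2 * p.2 := by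
        simp only [hlt, hgt, heqi]
        split_ifs <;> omega
      rw [hn]
      push_cast
      ring
    rw [decomp, key2, key1]
    have comb : (∑ p ∈ T, lam p * ((2 * p.2 * lt p + 2 * p.2 * eqi p : ℕ) : ENNReal))
        + ((∑ p ∈ T, lam p * (((2 * p.2 + 1) * lt p : ℕ) : ENNReal))
          + ∑ p ∈ T, lam p * ((lt p : ℕ) : ENNReal))
        ≤ ∑ p ∈ T, lam p * ((4 * f p.1 : ℕ) : ENNReal) := by
      rw [← sum_add, ← sum_add]
      refine Finset.sum_le_sum fun p _ => ?_
      refine mul_le_mul_right (Nat.cast_le.mpr ?_) _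
      simp only [hlt, hgt, heqi]
      split_ifs <;> omega
    refine le_trans comb ?_
    have h4 : (∑ p ∈ T, lam p * ((4 * f p.1 : ℕ) : ENNReal))
        = 4 * ∑ p ∈ T, lam p * ((f p.1 : ℕ) : ENNReal) := by
      rw [Finset.mul_sum]
      refine Finset.sum_congr rfl fun p _ => ?_
      push_cast
      ring
    rw [h4]
    have hfeas' : (∑ p ∈ T, lam p * ((f p.1 : ℕ) : ENNReal)) ≤ (μ : ENNReal) := by
      rw [← hsum fun p => ((f p.1 : ℕ) : ENNReal)]
      exact hfeas
    calc 4 * (∑ p ∈ T, lam p * ((f p.1 : ℕ) : ENNReal)) ≤ 4 * (μ : ENNReal) :=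
          mul_le_mul_right hfeas' 4
      _ = 2 * (2 * (μ : ENNReal)) := by ring
  rw [hsum fun p => ((p.2 : ℕ) : ENNReal)]
  exact (ENNReal.mul_le_mul_iff_right (by norm_num) (by norm_num)).mp main2
end

section
/- Let S be a finite set, P : S → PMF(S), f : S → ℕ, and let μ ≥ 1 be an integer. Suppose λ is a finitely supported PMF on S × ℕ that is the unique invariant PMF of the extended kernel κ and satisfies the feasibility constraint ∑_{(s,m)} λ(s,m)·f(s) ≤ μ. Then there exists a pair (s, m) in the support of λ with m ≤ 2μ − 1. -/
open scoped ENNReal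

lemma bind_exp {α : Type*} (lam : PMF α) (κ : α → PMF α) (g : α → ℝ≥0∞) :
    ∑' q, (lam.bind κ) q * g q = ∑' p, lam p * ∑' q, κ p q * g q := by
  simp only [PMF.bind_apply]
  calc ∑' q, (∑' p, lam p * κ p q) * g q
      = ∑' q, ∑' p, lam p * κ p q * g q :=
        tsum_congr fun q => ENNReal.tsum_mul_right.symm
    _ = ∑' p, ∑' q, lam p * κ p q * g q := ENNReal.tsum_comm
    _ = ∑' p, lam p * ∑' q, κ p q * g q := by
        refine tsum_congr fun p => ?_
        simp_rw [mul_assoc]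
        exact ENNReal.tsum_mul_left

lemma map_exp_snd {S : Type*} (d : PMF S) (c : ℕ) :
    ∑' q : S × ℕ, (d.map (fun s' => (s', c))) q * (q.2 : ℝ≥0∞) = (c : ℝ≥0∞) := by
  have h : ∀ q : S × ℕ, (d.map (fun s' => (s', c))) q * (q.2 : ℝ≥0∞)
      = (d.map (fun s' => (s', c))) q * (c : ℝ≥0∞) := by
    intro q
    by_cases hq : (d.map (fun s' => (s', c))) q = 0
    · simp [hq]
    · have : q ∈ (d.map (fun s' => (s', c))).support := hq
      rw [PMF.support_map] at this
      obtain ⟨s', _, rfl⟩ := this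
      rfl
  rw [tsum_congr h, ENNReal.tsum_mul_right, PMF.tsum_coe, one_mul]

/-- part (i) of Proposition 1: for a myopic agent and any feasible
trainer strategy, the minimal long-run mass is at most `2μ − 1`. -/
theorem minimal_mass_bound_myopic {S : Type*} [Fintype S] (P : S → PMF S) (f : S → ℕ)
    (μ : ℕ) (hμ : 1 ≤ μ)
    (lam : PMF (S × ℕ)) (hfin : lam.support.Finite)
    (hinv : lam.bind (extKernel P f) = lam)
    (huniq : ∀ lam' : PMF (S × ℕ), lam'.bind (extKernel P f) = lam' → lam' = lam)
    (hfeas : ∑' p : S × ℕ, lam p * (f p.1 : ENNReal) ≤ (μ : ENNReal)) :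
    ∃ p ∈ lam.support, p.2 ≤ 2 * μ - 1 := by
  by_contra hcon
  push_neg at hcon
  have hsupp : ∀ p : S × ℕ, lam p ≠ 0 → 2 * μ ≤ p.2 := by
    intro p hp
    have := hcon p hp
    omega
  -- E[m] is a finite quantity
  set F := hfin.toFinset with hF
  have hzero : ∀ p : S × ℕ, p ∉ F → lam p * (p.2 : ℝ≥0∞) = 0 := by
    intro p hp
    have : lam p = 0 := by
      by_contra h
      exact hp (hfin.mem_toFinset.mpr h)
    simp [this]
  have hfinEm : ∑' p : S × ℕ, lam p * (p.2 : ℝ≥0∞) ≠ ⊤ := by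
    rw [tsum_eq_sum hzero]
    refine (ENNReal.sum_lt_top.mpr fun p _ => ?_).ne
    exact (ENNReal.mul_ne_top (PMF.apply_ne_top lam p) (ENNReal.natCast_ne_top _)).lt_top
  -- invariance of the expectation of the second coordinate
  have hEinv : (∑' p : S × ℕ, lam p * ((adjust p.2 (f p.1) : ℕ) : ℝ≥0∞))
      = ∑' p : S × ℕ, lam p * (p.2 : ℝ≥0∞) := by
    have h := bind_exp lam (extKernel P f) (fun q => (q.2 : ℝ≥0∞))
    rw [hinv] at h
    rw [h]
    refine tsum_congr fun p => ?_
    congr 1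
    simp only [extKernel]
    exact (map_exp_snd (P p.1) (adjust p.2 (f p.1))).symm
  -- probabilities of upward and downward moves
  set a := ∑' p : S × ℕ, lam p * (((if p.2 < f p.1 then 1 else 0 : ℕ)) : ℝ≥0∞) with ha
  set b := ∑' p : S × ℕ, lam p * (((if f p.1 < p.2 then 1 else 0 : ℕ)) : ℝ≥0∞) with hb
  have hkey : (∑' p : S × ℕ, lam p * ((adjust p.2 (f p.1) : ℕ) : ℝ≥0∞)) + b
      = (∑' p : S × ℕ, lam p * (p.2 : ℝ≥0∞)) + a := by
    rw [ha, hb, ← ENNReal.tsum_add, ← ENNReal.tsum_add]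
    refine tsum_congr fun p => ?_
    rw [← mul_add, ← mul_add]
    congr 1
    have hnat : adjust p.2 (f p.1) + (if f p.1 < p.2 then 1 else 0)
        = p.2 + (if p.2 < f p.1 then 1 else 0) := by
      unfold adjust; split_ifs <;> omega
    exact_mod_cast hnat
  have hab : a = b := by
    rw [hEinv] at hkey
    exact ((ENNReal.add_right_inj hfinEm).mp hkey).symm
  have haddle : a + b ≤ 1 := by
    rw [ha, hb, ← ENNReal.tsum_add]
    calc ∑' p : S × ℕ, (lam p * (((if p.2 < f p.1 then 1 else 0 : ℕ)) : ℝ≥0∞)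
            + lam p * (((if f p.1 < p.2 then 1 else 0 : ℕ)) : ℝ≥0∞))
        = ∑' p : S × ℕ, lam p * ((((if p.2 < f p.1 then 1 else 0 : ℕ)) : ℝ≥0∞)
            + (((if f p.1 < p.2 then 1 else 0 : ℕ)) : ℝ≥0∞)) :=
          tsum_congr fun p => (mul_add _ _ _).symm
      _ ≤ ∑' p : S × ℕ, lam p * 1 := by
          refine ENNReal.tsum_le_tsum fun p => mul_le_mul_right ?_ _
          have : (if p.2 < f p.1 then 1 else 0 : ℕ) + (if f p.1 < p.2 then 1 else 0) ≤ 1 := by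
            split_ifs <;> omega
          exact_mod_cast this
      _ = 1 := by simp [PMF.tsum_coe]
  -- the main inequality from feasibility
  have h1 : ∑' p : S × ℕ, lam p * (2 * (μ : ℝ≥0∞)) = 2 * μ := by
    rw [ENNReal.tsum_mul_right, PMF.tsum_coe, one_mul]
  have h2 : ∑' p : S × ℕ, lam p * (2 * (μ : ℝ≥0∞)
      * (((if f p.1 < p.2 then 1 else 0 : ℕ)) : ℝ≥0∞)) = 2 * μ * b := by
    rw [hb, ← ENNReal.tsum_mul_left]
    exact tsum_congr fun p => by ring
  have hmain : 2 * (μ : ℝ≥0∞) + a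
      ≤ (∑' p : S × ℕ, lam p * (f p.1 : ℝ≥0∞)) + 2 * μ * b := by
    have e1 : ∑' p : S × ℕ, lam p * (2 * (μ : ℝ≥0∞)
        + (((if p.2 < f p.1 then 1 else 0 : ℕ)) : ℝ≥0∞)) = 2 * (μ : ℝ≥0∞) + a := by
      simp_rw [mul_add]
      rw [ENNReal.tsum_add, h1, ← ha]
    have e2 : ∑' p : S × ℕ, lam p * ((f p.1 : ℝ≥0∞)
        + 2 * (μ : ℝ≥0∞) * (((if f p.1 < p.2 then 1 else 0 : ℕ)) : ℝ≥0∞))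
        = (∑' p : S × ℕ, lam p * (f p.1 : ℝ≥0∞)) + 2 * μ * b := by
      simp_rw [mul_add]
      rw [ENNReal.tsum_add, h2]
    rw [← e1, ← e2]
    refine ENNReal.tsum_le_tsum fun p => ?_
    by_cases hp : lam p = 0
    · simp [hp]
    · refine mul_le_mul_right ?_ _
      have h2μ := hsupp p hp
      have hnat : 2 * μ + (if p.2 < f p.1 then 1 else 0)
          ≤ f p.1 + 2 * μ * (if f p.1 < p.2 then 1 else 0) := by
        split_ifs <;> omega
      calc 2 * (μ : ℝ≥0∞) + (((if p.2 < f p.1 then 1 else 0 : ℕ)) : ℝ≥0∞)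
          = ((2 * μ + (if p.2 < f p.1 then 1 else 0) : ℕ) : ℝ≥0∞) := by push_cast; ring
        _ ≤ ((f p.1 + 2 * μ * (if f p.1 < p.2 then 1 else 0) : ℕ) : ℝ≥0∞) :=
            Nat.cast_le.mpr hnat
        _ = _ := by push_cast; ring
  have h2a : 2 * a ≤ 1 := by
    rw [two_mul]
    calc a + a = a + b := by rw [hab]
      _ ≤ 1 := haddle
  have hμtop : (2 * (μ : ℝ≥0∞)) ≠ ⊤ :=
    ENNReal.mul_ne_top (by norm_num) (ENNReal.natCast_ne_top μ)
  have hstep : 2 * (μ : ℝ≥0∞) + a ≤ 2 * (μ : ℝ≥0∞) + 0 := by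
    rw [add_zero]
    have hbb : 2 * (μ : ℝ≥0∞) * b ≤ (μ : ℝ≥0∞) :=
      calc 2 * (μ : ℝ≥0∞) * b = (μ : ℝ≥0∞) * (2 * a) := by rw [hab]; ring
        _ ≤ (μ : ℝ≥0∞) * 1 := mul_le_mul_right h2a _
        _ = (μ : ℝ≥0∞) := mul_one _
    calc 2 * (μ : ℝ≥0∞) + a
        ≤ (∑' p : S × ℕ, lam p * (f p.1 : ℝ≥0∞)) + 2 * μ * b := hmain
      _ ≤ (μ : ℝ≥0∞) + (μ : ℝ≥0∞) := add_le_add hfeas hbb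
      _ = 2 * (μ : ℝ≥0∞) := (two_mul _).symm
  have ha0 : a = 0 :=
    le_antisymm ((ENNReal.add_le_add_iff_left hμtop).mp hstep) zero_le
  have hb0 : b = 0 := hab.symm.trans ha0
  have hfin2 : 2 * (μ : ℝ≥0∞) ≤ (μ : ℝ≥0∞) := by
    calc 2 * (μ : ℝ≥0∞) = 2 * (μ : ℝ≥0∞) + a := by rw [ha0, add_zero]
      _ ≤ (∑' p : S × ℕ, lam p * (f p.1 : ℝ≥0∞)) + 2 * μ * b := hmain
      _ = ∑' p : S × ℕ, lam p * (f p.1 : ℝ≥0∞) := by rw [hb0, mul_zero, add_zero]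
      _ ≤ (μ : ℝ≥0∞) := hfeas
  have : 2 * μ ≤ μ := by exact_mod_cast hfin2
  omega
end

section
/- Let μ ≥ 1 be an integer and β a real number with 0 < β < 1. Let S = {L, H}, let P : S → PMF(S) be given by P(L) = point mass at H and P(H) = β·(point mass at L) + (1−β)·(point mass at H), and let f(H) = 2μ, f(L) = 0. Then the PMF λ_β on S × ℕ defined by λ_β(H, 2μ−1) = β/(1+β), λ_β(L, 2μ) = β/(1+β), λ_β(H, 2μ) = (1−β)/(1+β), and λ_β = 0 elsewhere, is invariant for the extended kernel κ, and it is the unique invariant PMF of κ. In particular, the only masses m carrying positive probability under λ_β are 2μ − 1 and 2μ. -/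
open ENNReal

section helpers
variable {β : ℝ} (P : Bool → PMF Bool) (f : Bool → ℕ)

lemma kFalse (hPL : P false = PMF.pure true) (m : ℕ) (p : Bool × ℕ) :
    extKernel P f (false, m) p = if p = (true, adjust m (f false)) then 1 else 0 := by
  simp only [extKernel, hPL, PMF.pure_map, PMF.pure_apply]
  split_ifs <;> rfl

lemma kTrue (hPHL : P true false = ENNReal.ofReal β)
    (hPHH : P true true = ENNReal.ofReal (1 - β)) (m : ℕ) (p : Bool × ℕ) :
    extKernel P f (true, m) p =
      (if p = (false, adjust m (f true)) then ENNReal.ofReal β else 0)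
      + (if p = (true, adjust m (f true)) then ENNReal.ofReal (1 - β) else 0) := by
  simp only [extKernel]
  rw [PMF.map_apply, tsum_bool, hPHL, hPHH]
  split_ifs <;> rfl

lemma bindFormula (lam' : PMF (Bool × ℕ)) (p : Bool × ℕ) :
    (lam'.bind (extKernel P f)) p
      = (∑' m, lam' (false, m) * extKernel P f (false, m) p)
      + (∑' m, lam' (true, m) * extKernel P f (true, m) p) := by
  rw [PMF.bind_apply, ENNReal.tsum_prod', tsum_bool]

end helpers

lemma invariant_values (μ : ℕ) (hμ : 1 ≤ μ) (β : ℝ) (hβ0 : 0 < β) (hβ1 : β < 1)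
    (P : Bool → PMF Bool)
    (hPL : P false = PMF.pure true)
    (hPHL : P true false = ENNReal.ofReal β)
    (hPHH : P true true = ENNReal.ofReal (1 - β))
    (f : Bool → ℕ) (hfH : f true = 2 * μ) (hfL : f false = 0)
    (lam' : PMF (Bool × ℕ)) (hinv : lam'.bind (extKernel P f) = lam') :
    lam' (true, 2 * μ - 1) = ENNReal.ofReal (β / (1 + β)) ∧
    lam' (false, 2 * μ) = ENNReal.ofReal (β / (1 + β)) ∧
    lam' (true, 2 * μ) = ENNReal.ofReal ((1 - β) / (1 + β)) ∧
    (∀ k, k ≠ 2 * μ → lam' (false, k) = 0) ∧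
    (∀ k, k ≠ 2 * μ - 1 → k ≠ 2 * μ → lam' (true, k) = 0) := by
  classical
  have h1β : (0:ℝ) < 1 + β := by linarith
  set βE := ENNReal.ofReal β with hβE
  set γE := ENNReal.ofReal (1 - β) with hγE
  -- pointwise equations from invariance
  have hFeq : ∀ k, lam' (false, k)
      = ∑' m, (if k = adjust m (2*μ) then lam' (true, m) * βE else 0) := by
    intro k
    conv_lhs => rw [← hinv]
    rw [bindFormula]
    have h1 : (∑' m, lam' (false, m) * extKernel P f (false, m) (false, k)) = 0 := by
      refine ENNReal.tsum_eq_zero.mpr fun m => ?_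
      rw [kFalse P f hPL]
      simp
    have h2 : ∀ m, lam' (true, m) * extKernel P f (true, m) (false, k)
        = if k = adjust m (2*μ) then lam' (true, m) * βE else 0 := by
      intro m
      rw [kTrue P f hPHL hPHH, hfH]
      by_cases h : k = adjust m (2*μ)
      · simp [h, hβE]
      · simp [h, Prod.mk.injEq]
    rw [h1, tsum_congr h2, zero_add]
  have hTeq : ∀ k, lam' (true, k)
      = (∑' m, if k = adjust m 0 then lam' (false, m) else 0)
        + ∑' m, (if k = adjust m (2*μ) then lam' (true, m) * γE else 0) := by
    intro k
    conv_lhs => rw [← hinv]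
    rw [bindFormula]
    have h1 : ∀ m, lam' (false, m) * extKernel P f (false, m) (true, k)
        = if k = adjust m 0 then lam' (false, m) else 0 := by
      intro m
      rw [kFalse P f hPL, hfL]
      by_cases h : k = adjust m 0
      · simp [h]
      · simp [h, Prod.mk.injEq]
    have h2 : ∀ m, lam' (true, m) * extKernel P f (true, m) (true, k)
        = if k = adjust m (2*μ) then lam' (true, m) * γE else 0 := by
      intro m
      rw [kTrue P f hPHL hPHH, hfH]
      by_cases h : k = adjust m (2*μ)
      · simp [h, hγE]
      · simp [h, Prod.mk.injEq]
    rw [tsum_congr h1, tsum_congr h2]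
  -- adjust characterizations
  have hA0 : ∀ m : ℕ, ¬ (0 = adjust m (2*μ)) := by
    intro m; unfold adjust; split_ifs <;> first | exact not_false | omega
  have hAlow : ∀ j m : ℕ, j + 1 < 2*μ → (j + 1 = adjust m (2*μ) ↔ m = j) := by
    intro j m hj; unfold adjust; split_ifs <;> first | exact not_false | omega
  have hAmid : ∀ m : ℕ, (2*μ = adjust m (2*μ) ↔ (m = 2*μ-1 ∨ m = 2*μ ∨ m = 2*μ+1)) := by
    intro m; unfold adjust; split_ifs <;> first | exact not_false | omega
  have hAhigh : ∀ k m : ℕ, 2*μ < k → (k = adjust m (2*μ) ↔ m = k + 1) := by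
    intro k m hk; unfold adjust; split_ifs <;> first | exact not_false | omega
  have hB : ∀ k m : ℕ, 1 ≤ k → (k = adjust m 0 ↔ m = k + 1) := by
    intro k m hk; unfold adjust; split_ifs <;> first | exact not_false | omega
  have hB0 : ∀ m : ℕ, (0 = adjust m 0 ↔ m = 0 ∨ m = 1) := by
    intro m; unfold adjust; split_ifs <;> first | exact not_false | omega
  -- concrete equations
  have hF0 : lam' (false, 0) = 0 := by
    rw [hFeq]
    exact ENNReal.tsum_eq_zero.mpr fun m => if_neg (hA0 m)
  have hFlow : ∀ j, j + 1 < 2*μ → lam' (false, j+1) = lam' (true, j) * βE := by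
    intro j hj
    rw [hFeq, tsum_eq_single j (fun m hm => if_neg (fun hc => hm ((hAlow j m hj).mp hc))),
      if_pos ((hAlow j j hj).mpr rfl)]
  have hFmid : lam' (false, 2*μ)
      = lam' (true, 2*μ-1) * βE + lam' (true, 2*μ) * βE + lam' (true, 2*μ+1) * βE := by
    rw [hFeq, tsum_eq_sum (s := {2*μ-1, 2*μ, 2*μ+1})
      (fun m hm => if_neg (fun hc => hm (by
        rcases (hAmid m).mp hc with h | h | h <;> simp [h])))]
    rw [Finset.sum_insert (by simp only [Finset.mem_insert, Finset.mem_singleton]; omega), Finset.sum_insert (by simp only [Finset.mem_insert, Finset.mem_singleton]; omega),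
      Finset.sum_singleton]
    rw [if_pos ((hAmid _).mpr (Or.inl rfl)), if_pos ((hAmid _).mpr (Or.inr (Or.inl rfl))),
      if_pos ((hAmid _).mpr (Or.inr (Or.inr rfl)))]
    ring
  have hFhigh : ∀ k, 2*μ < k → lam' (false, k) = lam' (true, k+1) * βE := by
    intro k hk
    rw [hFeq, tsum_eq_single (k+1) (fun m hm => if_neg (fun hc => hm ((hAhigh k m hk).mp hc))),
      if_pos ((hAhigh k (k+1) hk).mpr rfl)]
  have hT0 : lam' (true, 0) = lam' (false, 0) + lam' (false, 1) := by
    rw [hTeq]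
    have e2 : (∑' m, (if 0 = adjust m (2*μ) then lam' (true, m) * γE else 0)) = 0 :=
      ENNReal.tsum_eq_zero.mpr fun m => if_neg (hA0 m)
    rw [e2, add_zero, tsum_eq_sum (s := {0, 1})
      (fun m hm => if_neg (fun hc => hm (by rcases (hB0 m).mp hc with h | h <;> simp [h])))]
    rw [Finset.sum_insert (by simp), Finset.sum_singleton,
      if_pos ((hB0 0).mpr (Or.inl rfl)), if_pos ((hB0 1).mpr (Or.inr rfl))]
  have hTlow : ∀ j, j + 1 < 2*μ →
      lam' (true, j+1) = lam' (false, j+2) + lam' (true, j) * γE := by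
    intro j hj
    rw [hTeq]
    rw [tsum_eq_single (j+2) (fun m hm => if_neg (fun hc => hm ((hB (j+1) m (by omega)).mp hc))),
      if_pos ((hB (j+1) (j+2) (by omega)).mpr rfl)]
    rw [tsum_eq_single j (fun m hm => if_neg (fun hc => hm ((hAlow j m hj).mp hc))),
      if_pos ((hAlow j j hj).mpr rfl)]
  have hTmid : lam' (true, 2*μ) = lam' (false, 2*μ+1)
      + (lam' (true, 2*μ-1) * γE + lam' (true, 2*μ) * γE + lam' (true, 2*μ+1) * γE) := by
    conv_lhs => rw [hTeq]
    rw [tsum_eq_single (2*μ+1) (fun m hm => if_neg (fun hc => hm ((hB (2*μ) m (by omega)).mp hc))),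
      if_pos ((hB (2*μ) (2*μ+1) (by omega)).mpr rfl)]
    rw [tsum_eq_sum (s := {2*μ-1, 2*μ, 2*μ+1})
      (fun m hm => if_neg (fun hc => hm (by
        rcases (hAmid m).mp hc with h | h | h <;> simp [h])))]
    rw [Finset.sum_insert (by simp only [Finset.mem_insert, Finset.mem_singleton]; omega), Finset.sum_insert (by simp only [Finset.mem_insert, Finset.mem_singleton]; omega),
      Finset.sum_singleton]
    rw [if_pos ((hAmid _).mpr (Or.inl rfl)), if_pos ((hAmid _).mpr (Or.inr (Or.inl rfl))),
      if_pos ((hAmid _).mpr (Or.inr (Or.inr rfl)))]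
    ring
  have hThigh : ∀ k, 2*μ < k →
      lam' (true, k) = lam' (false, k+1) + lam' (true, k+1) * γE := by
    intro k hk
    rw [hTeq]
    rw [tsum_eq_single (k+1) (fun m hm => if_neg (fun hc => hm ((hB k m (by omega)).mp hc))),
      if_pos ((hB k (k+1) (by omega)).mpr rfl)]
    rw [tsum_eq_single (k+1) (fun m hm => if_neg (fun hc => hm ((hAhigh k m hk).mp hc))),
      if_pos ((hAhigh k (k+1) hk).mpr rfl)]
  -- basic ENNReal facts
  have hβE1 : βE < 1 := by rw [hβE, ← ENNReal.ofReal_one]; exact ENNReal.ofReal_lt_ofReal_iff (by norm_num) |>.mpr hβ1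
  have hγE1 : γE < 1 := by rw [hγE, ← ENNReal.ofReal_one]; exact ENNReal.ofReal_lt_ofReal_iff (by norm_num) |>.mpr (by linarith)
  have hγE0 : γE ≠ 0 := by rw [hγE]; exact (ENNReal.ofReal_pos.mpr (by linarith)).ne'
  have hfin : ∀ p : Bool × ℕ, lam' p ≠ ⊤ := fun p => lam'.apply_ne_top p
  have selfmulβ : ∀ x : ℝ≥0∞, x ≠ ⊤ → x = x * βE → x = 0 := by
    intro x hx h
    by_contra h0
    have hlt : x * βE < x * 1 := (ENNReal.mul_lt_mul_iff_right h0 hx).mpr hβE1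
    rw [mul_one] at hlt
    exact hlt.ne h.symm
  -- all low states vanish
  have hTzlow : ∀ j, j + 1 < 2*μ → lam' (true, j) = 0 := by
    intro j
    induction j with
    | zero =>
      intro hj
      have h01 := hFlow 0 hj
      have h := hT0
      rw [hF0, zero_add, h01] at h
      exact selfmulβ _ (hfin _) h
    | succ n ih =>
      intro hj
      have hn : lam' (true, n) = 0 := ih (by omega)
      have h2 := hTlow n (by omega)
      rw [hn, zero_mul, add_zero, hFlow (n+1) hj] at h2
      exact selfmulβ _ (hfin _) h2
  have hFzlow : ∀ j, j + 1 < 2*μ → lam' (false, j+1) = 0 := by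
    intro j hj; rw [hFlow j hj, hTzlow j hj, zero_mul]
  -- tail vanishes
  have hrec : ∀ n, lam' (true, 2*μ+1+n)
      = lam' (true, 2*μ+1+(n+1)) * γE + lam' (true, 2*μ+1+(n+2)) * βE := by
    intro n
    have e1 : 2*μ+1+(n+1) = (2*μ+1+n)+1 := by omega
    have e2 : 2*μ+1+(n+2) = ((2*μ+1+n)+1)+1 := by omega
    rw [e1, e2, hThigh (2*μ+1+n) (by omega), hFhigh ((2*μ+1+n)+1) (by omega), add_comm]
  have hA0fin : (∑' n, lam' (true, 2*μ+1+n)) ≠ ⊤ := by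
    have hle : (∑' n, lam' (true, 2*μ+1+n)) ≤ ∑' p : Bool × ℕ, lam' p := by
      exact tsum_comp_le_tsum_of_injective
        (f := fun n : ℕ => ((true, 2*μ+1+n) : Bool × ℕ))
        (fun a b hab => by simpa using hab) lam'
    rw [lam'.tsum_coe] at hle
    exact (lt_of_le_of_lt hle ENNReal.one_lt_top).ne
  have hTail0 : lam' (true, 2*μ+1) = 0 ∧ lam' (true, 2*μ+1+1) = 0 := by
    set h : ℕ → ℝ≥0∞ := fun n => lam' (true, 2*μ+1+n) with hh
    have e0 : ∑' n, h n = h 0 + ∑' n, h (n+1) := tsum_eq_zero_add' ENNReal.summable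
    have e1 : ∑' n, h (n+1) = h 1 + ∑' n, h (n+2) :=
      tsum_eq_zero_add' (f := fun n => h (n+1)) ENNReal.summable
    have erec : ∑' n, h n = (∑' n, h (n+1)) * γE + (∑' n, h (n+2)) * βE := by
      calc ∑' n, h n = ∑' n, (h (n+1) * γE + h (n+2) * βE) := tsum_congr hrec
        _ = (∑' n, h (n+1) * γE) + ∑' n, h (n+2) * βE := ENNReal.tsum_add
        _ = (∑' n, h (n+1)) * γE + (∑' n, h (n+2)) * βE := by
            rw [ENNReal.tsum_mul_right, ENNReal.tsum_mul_right]
    have hγβ1 : γE + βE = 1 := by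
      rw [hγE, hβE, ← ENNReal.ofReal_add (by linarith) (by linarith)]
      norm_num
    have hA2fin : (∑' n, h (n+2)) ≠ ⊤ := by
      intro hT
      apply hA0fin
      show (∑' n, h n) = ⊤
      rw [e0, e1, hT, add_top, add_top]
    have hkey : (h 0 + h 1) + ∑' n, h (n+2) = h 1 * γE + ∑' n, h (n+2) := by
      calc (h 0 + h 1) + ∑' n, h (n+2) = h 0 + (h 1 + ∑' n, h (n+2)) := by ring
        _ = ∑' n, h n := by rw [← e1, ← e0]
        _ = (∑' n, h (n+1)) * γE + (∑' n, h (n+2)) * βE := erec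
        _ = (h 1 + ∑' n, h (n+2)) * γE + (∑' n, h (n+2)) * βE := by rw [← e1]
        _ = h 1 * γE + ((∑' n, h (n+2)) * (γE + βE)) := by ring
        _ = h 1 * γE + ∑' n, h (n+2) := by rw [hγβ1, mul_one]
    have hkey2 : h 0 + h 1 = h 1 * γE := (ENNReal.add_left_inj hA2fin).mp hkey
    have hh1 : h 1 = 0 := by
      by_contra h0
      have h1le : h 1 ≤ h 1 * γE := hkey2 ▸ le_add_self
      have hlt : h 1 * γE < h 1 * 1 := (ENNReal.mul_lt_mul_iff_right h0 (hfin _)).mpr hγE1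
      rw [mul_one] at hlt
      exact absurd (h1le.trans_lt hlt) (lt_irrefl _)
    have hh0 : h 0 = 0 := by
      have := hkey2
      rw [hh1, add_zero, zero_mul] at this
      exact this
    exact ⟨hh0, hh1⟩
  have hTailAll : ∀ n, lam' (true, 2*μ+1+n) = 0 := by
    intro n
    induction n with
    | zero => exact hTail0.1
    | succ n ih =>
      have h := hrec n
      rw [ih] at h
      have := (add_eq_zero.mp h.symm).1
      rcases mul_eq_zero.mp this with h' | h'
      · exact h'
      · exact absurd h' hγE0
  have hTzhigh : ∀ k, 2*μ < k → lam' (true, k) = 0 := by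
    intro k hk
    have := hTailAll (k - (2*μ+1))
    rwa [show 2*μ+1+(k-(2*μ+1)) = k from by omega] at this
  have hFzhigh : ∀ k, 2*μ < k → lam' (false, k) = 0 := by
    intro k hk; rw [hFhigh k hk, hTzhigh (k+1) (by omega), zero_mul]
  -- collect zero lemmas
  have hFzero : ∀ k, k ≠ 2*μ → lam' (false, k) = 0 := by
    intro k hk
    by_cases h1 : k < 2*μ
    · cases k with
      | zero => exact hF0
      | succ j => exact hFzlow j h1
    · exact hFzhigh k (by omega)
  have hTzero : ∀ k, k ≠ 2*μ-1 → k ≠ 2*μ → lam' (true, k) = 0 := by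
    intro k hk1 hk2
    by_cases h1 : k < 2*μ
    · exact hTzlow k (by omega)
    · exact hTzhigh k (by omega)
  -- final values
  have hT21 : lam' (true, 2*μ+1) = 0 := hTzhigh (2*μ+1) (by omega)
  have hF21 : lam' (false, 2*μ+1) = 0 := hFzhigh (2*μ+1) (by omega)
  have hxz : lam' (true, 2*μ-1) = lam' (false, 2*μ) := by
    obtain ⟨j, hj⟩ : ∃ j, 2*μ-1 = j+1 := ⟨2*μ-2, by omega⟩
    rw [hj, hTlow j (by omega), hTzlow j (by omega), zero_mul, add_zero,
      show j+2 = 2*μ from by omega]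
  have hz : lam' (false, 2*μ) = lam' (true, 2*μ-1) * βE + lam' (true, 2*μ) * βE := by
    rw [hFmid, hT21, zero_mul, add_zero]
  have hy : lam' (true, 2*μ) = lam' (true, 2*μ-1) * γE + lam' (true, 2*μ) * γE := by
    conv_lhs => rw [hTmid]
    rw [hT21, hF21, zero_mul, add_zero, zero_add]
  have hFsum : (∑' k, lam' (false, k)) = lam' (false, 2*μ) :=
    tsum_eq_single (2*μ) (fun k hk => hFzero k hk)
  have hTsum : (∑' k, lam' (true, k)) = lam' (true, 2*μ-1) + lam' (true, 2*μ) := by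
    rw [tsum_eq_sum (s := {2*μ-1, 2*μ})
      (fun k hk => hTzero k
        (by simp only [Finset.mem_insert, Finset.mem_singleton] at hk; tauto)
        (by simp only [Finset.mem_insert, Finset.mem_singleton] at hk; tauto)),
      Finset.sum_insert (by simp only [Finset.mem_singleton]; omega), Finset.sum_singleton]
  have hnorm : lam' (false, 2*μ) + (lam' (true, 2*μ-1) + lam' (true, 2*μ)) = 1 := by
    have h := lam'.tsum_coe
    rw [ENNReal.tsum_prod', tsum_bool, hFsum, hTsum] at h
    exact h
  -- solve
  have haNN : (0:ℝ) ≤ β / (1 + β) := by positivity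
  have hcNN : (0:ℝ) ≤ (1 - β) / (1 + β) := div_nonneg (by linarith) (by linarith)
  have hz_val : lam' (false, 2*μ) = ENNReal.ofReal (β / (1 + β)) := by
    have key1 : lam' (false, 2*μ) * (1 + βE) = βE := by
      have step : lam' (false, 2*μ) * (1 + βE)
          = (lam' (false, 2*μ) + (lam' (true, 2*μ-1) + lam' (true, 2*μ))) * βE := by
        calc lam' (false, 2*μ) * (1 + βE)
            = lam' (false, 2*μ) + lam' (false, 2*μ) * βE := by ring
          _ = (lam' (true, 2*μ-1) * βE + lam' (true, 2*μ) * βE)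
              + lam' (false, 2*μ) * βE := by nth_rewrite 1 [hz]; ring
          _ = (lam' (false, 2*μ) + (lam' (true, 2*μ-1) + lam' (true, 2*μ))) * βE := by ring
      rw [step, hnorm, one_mul]
    have key2 : ENNReal.ofReal (β / (1 + β)) * (1 + βE) = βE := by
      rw [hβE, show (1:ℝ≥0∞) + ENNReal.ofReal β = ENNReal.ofReal (1 + β) from by
          rw [ENNReal.ofReal_add (by norm_num) hβ0.le, ENNReal.ofReal_one],
        ← ENNReal.ofReal_mul haNN]
      congr 1
      field_simp
    have hc1 : (1 : ℝ≥0∞) + βE ≠ 0 := by simp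
    have hc2 : (1 : ℝ≥0∞) + βE ≠ ⊤ := by
      rw [hβE]; exact ENNReal.add_ne_top.mpr ⟨ENNReal.one_ne_top, ENNReal.ofReal_ne_top⟩
    exact (ENNReal.mul_left_inj hc1 hc2).mp (key1.trans key2.symm)
  have hx_val : lam' (true, 2*μ-1) = ENNReal.ofReal (β / (1 + β)) := hxz.trans hz_val
  have hy_val : lam' (true, 2*μ) = ENNReal.ofReal ((1 - β) / (1 + β)) := by
    have htot : ENNReal.ofReal (β / (1 + β))
        + (ENNReal.ofReal (β / (1 + β)) + ENNReal.ofReal ((1 - β) / (1 + β))) = 1 := by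
      rw [← ENNReal.ofReal_add haNN hcNN, ← ENNReal.ofReal_add haNN (add_nonneg haNN hcNN),
        show β / (1+β) + (β / (1+β) + (1-β) / (1+β)) = 1 from by field_simp; ring,
        ENNReal.ofReal_one]
    have h := hnorm
    rw [hz_val, hx_val] at h
    rw [← htot] at h
    have h1 := (ENNReal.add_right_inj ENNReal.ofReal_ne_top).mp h
    exact (ENNReal.add_right_inj ENNReal.ofReal_ne_top).mp h1
  exact ⟨hx_val, hz_val, hy_val, hFzero, hTzero⟩

/-- implementation for part (ii) of Proposition 1: with states
`L = false`, `H = true`, transitions `Pr(L → H) = 1`, `Pr(H → L) = β`, and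
intensities `f H = 2μ`, `f L = 0`, the PMF `λ_β` that puts probability `β/(1+β)`
on `(H, 2μ−1)`, `β/(1+β)` on `(L, 2μ)` and `(1−β)/(1+β)` on `(H, 2μ)` is the unique
invariant PMF of the extended kernel; its support only carries masses `2μ−1, 2μ`. -/
theorem myopic_implementation (μ : ℕ) (hμ : 1 ≤ μ) (β : ℝ) (hβ0 : 0 < β) (hβ1 : β < 1)
    (P : Bool → PMF Bool)
    (hPL : P false = PMF.pure true)
    (hPHL : P true false = ENNReal.ofReal β)
    (hPHH : P true true = ENNReal.ofReal (1 - β))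
    (f : Bool → ℕ) (hfH : f true = 2 * μ) (hfL : f false = 0) :
    ∃ lam : PMF (Bool × ℕ),
      lam (true, 2 * μ - 1) = ENNReal.ofReal (β / (1 + β)) ∧
      lam (false, 2 * μ) = ENNReal.ofReal (β / (1 + β)) ∧
      lam (true, 2 * μ) = ENNReal.ofReal ((1 - β) / (1 + β)) ∧
      (∀ p : Bool × ℕ, p ≠ (true, 2 * μ - 1) → p ≠ (false, 2 * μ) →
        p ≠ (true, 2 * μ) → lam p = 0) ∧
      lam.bind (extKernel P f) = lam ∧
      (∀ lam' : PMF (Bool × ℕ), lam'.bind (extKernel P f) = lam' → lam' = lam) ∧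
      (∀ p ∈ lam.support, p.2 = 2 * μ - 1 ∨ p.2 = 2 * μ) := by

  classical
  have h1β : (0:ℝ) < 1 + β := by linarith
  have haNN : (0:ℝ) ≤ β / (1 + β) := by positivity
  have hcNN : (0:ℝ) ≤ (1 - β) / (1 + β) := div_nonneg (by linarith) (by linarith)
  set a : ℝ≥0∞ := ENNReal.ofReal (β / (1 + β)) with ha
  set c : ℝ≥0∞ := ENNReal.ofReal ((1 - β) / (1 + β)) with hc
  set w : Bool × ℕ → ℝ≥0∞ := fun p =>
    if p = (true, 2*μ-1) then a else if p = (false, 2*μ) then a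
      else if p = (true, 2*μ) then c else 0 with hwdef
  have hne1 : ((true, 2*μ-1) : Bool × ℕ) ≠ (false, 2*μ) := by simp
  have hne2 : ((true, 2*μ-1) : Bool × ℕ) ≠ (true, 2*μ) := by
    simp only [ne_eq, Prod.mk.injEq, true_and]; omega
  have hne3 : ((false, 2*μ) : Bool × ℕ) ≠ (true, 2*μ) := by simp
  have hw1 : w (true, 2*μ-1) = a := if_pos rfl
  have hw2 : w (false, 2*μ) = a := by
    rw [hwdef]; simp only []; rw [if_neg (Ne.symm hne1)]; simp
  have hw3 : w (true, 2*μ) = c := by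
    rw [hwdef]; simp only []; rw [if_neg (Ne.symm hne2), if_neg (Ne.symm hne3)]; simp
  have hwzero : ∀ p : Bool × ℕ, p ≠ (true, 2*μ-1) → p ≠ (false, 2*μ) → p ≠ (true, 2*μ) →
      w p = 0 := by
    intro p h1 h2 h3
    rw [hwdef]; simp only []; rw [if_neg h1, if_neg h2, if_neg h3]
  have htot : a + (a + c) = 1 := by
    rw [ha, hc, ← ENNReal.ofReal_add haNN hcNN, ← ENNReal.ofReal_add haNN (add_nonneg haNN hcNN),
      show β / (1+β) + (β / (1+β) + (1-β) / (1+β)) = 1 from by field_simp; ring,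
      ENNReal.ofReal_one]
  have hsum : ∑ p ∈ ({(true, 2*μ-1), (false, 2*μ), (true, 2*μ)} : Finset (Bool × ℕ)), w p = 1 := by
    rw [Finset.sum_insert (by
        simp only [Finset.mem_insert, Finset.mem_singleton]
        push_neg
        exact ⟨hne1, hne2⟩),
      Finset.sum_insert (by simp only [Finset.mem_singleton]; exact hne3),
      Finset.sum_singleton, hw1, hw2, hw3, htot]
  have hout : ∀ p ∉ ({(true, 2*μ-1), (false, 2*μ), (true, 2*μ)} : Finset (Bool × ℕ)), w p = 0 := by
    intro p hp
    simp only [Finset.mem_insert, Finset.mem_singleton] at hp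
    push_neg at hp
    exact hwzero p hp.1 hp.2.1 hp.2.2
  refine ⟨PMF.ofFinset w _ hsum hout, ?_⟩
  set lam : PMF (Bool × ℕ) := PMF.ofFinset w _ hsum hout with hlamdef
  have hlam : ∀ p, lam p = w p := fun p => PMF.ofFinset_apply hsum hout p
  -- kernel target masses
  have hadj1 : adjust (2*μ) 0 = 2*μ-1 := by unfold adjust; split_ifs <;> omega
  have hadj2 : adjust (2*μ-1) (2*μ) = 2*μ := by unfold adjust; split_ifs <;> omega
  have hadj3 : adjust (2*μ) (2*μ) = 2*μ := by unfold adjust; split_ifs <;> omega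
  have keyF : a * ENNReal.ofReal β + c * ENNReal.ofReal β = a := by
    rw [ha, hc, ← ENNReal.ofReal_mul haNN, ← ENNReal.ofReal_mul hcNN,
      ← ENNReal.ofReal_add (by positivity) (mul_nonneg hcNN hβ0.le)]
    congr 1
    field_simp
    ring
  have keyT : a * ENNReal.ofReal (1-β) + c * ENNReal.ofReal (1-β) = c := by
    rw [ha, hc, ← ENNReal.ofReal_mul haNN, ← ENNReal.ofReal_mul hcNN,
      ← ENNReal.ofReal_add (mul_nonneg haNN (by linarith)) (mul_nonneg hcNN (by linarith))]
    congr 1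
    field_simp
    ring
  have hInv : lam.bind (extKernel P f) = lam := by
    apply PMF.ext
    intro p
    rw [bindFormula P f lam p, hlam]
    have hfs : (∑' m, lam (false, m) * extKernel P f (false, m) p)
        = a * extKernel P f (false, 2*μ) p := by
      rw [tsum_eq_single (2*μ) (fun m hm => by
        rw [hlam, hwzero (false, m) (by simp) (by simp [hm]) (by simp), zero_mul]),
        hlam, hw2]
    have hts : (∑' m, lam (true, m) * extKernel P f (true, m) p)
        = a * extKernel P f (true, 2*μ-1) p + c * extKernel P f (true, 2*μ) p := by
      rw [tsum_eq_sum (s := {2*μ-1, 2*μ}) (fun m hm => by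
        simp only [Finset.mem_insert, Finset.mem_singleton] at hm
        push_neg at hm
        rw [hlam, hwzero (true, m) (by simp [hm.1]) (by simp) (by simp [hm.2]), zero_mul]),
        Finset.sum_insert (by simp only [Finset.mem_singleton]; omega), Finset.sum_singleton,
        hlam, hlam, hw1, hw3]
    rw [hfs, hts, kFalse P f hPL, kTrue P f hPHL hPHH, kTrue P f hPHL hPHH, hfH, hfL,
      hadj1, hadj2, hadj3]
    by_cases h1 : p = (true, 2*μ-1)
    · rw [h1, if_pos rfl, if_neg hne1, if_neg hne2, hw1]
      simp
    · by_cases h2 : p = (false, 2*μ)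
      · rw [h2, if_neg (Ne.symm hne1), if_pos rfl, if_neg hne3, hw2]
        simp only [mul_zero, zero_add, add_zero, mul_one]
        exact keyF
      · by_cases h3 : p = (true, 2*μ)
        · rw [h3, if_neg (Ne.symm hne2), if_neg (Ne.symm hne3), if_pos rfl, hw3]
          simp only [mul_zero, zero_add, add_zero, mul_one]
          exact keyT
        · rw [if_neg h1, if_neg h2, if_neg h3, hwzero p h1 h2 h3]
          simp
  have hzeroP : ∀ p : Bool × ℕ, p ≠ (true, 2*μ-1) → p ≠ (false, 2*μ) → p ≠ (true, 2*μ) →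
      lam p = 0 := by
    intro p h1 h2 h3; rw [hlam]; exact hwzero p h1 h2 h3
  refine ⟨by rw [hlam, hw1], by rw [hlam, hw2], by rw [hlam, hw3], hzeroP, hInv, ?_, ?_⟩
  · intro lam' hinv'
    obtain ⟨v1, v2, v3, vF, vT⟩ :=
      invariant_values μ hμ β hβ0 hβ1 P hPL hPHL hPHH f hfH hfL lam' hinv'
    apply PMF.ext
    intro p
    obtain ⟨b, k⟩ := p
    rw [hlam]
    cases b with
    | false =>
      by_cases hk : k = 2*μ
      · subst hk; rw [v2, hw2, ha]
      · rw [vF k hk, hwzero (false, k) (by simp) (by simp [hk]) (by simp)]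
    | true =>
      by_cases hk1 : k = 2*μ-1
      · subst hk1; rw [v1, hw1, ha]
      · by_cases hk2 : k = 2*μ
        · subst hk2; rw [v3, hw3, hc]
        · rw [vT k hk1 hk2, hwzero (true, k) (by simp [hk1]) (by simp) (by simp [hk2])]
  · intro p hp
    by_contra hcon
    push_neg at hcon
    have h0 : lam p = 0 := hzeroP p (fun h => hcon.1 (by rw [h])) (fun h => hcon.2 (by rw [h]))
      (fun h => hcon.2 (by rw [h]))
    exact ((PMF.mem_support_iff lam p).mp hp) h0
end

section
/- Let K ≥ 1 be an integer and let α, β be real numbers with 0 < α ≤ 1 and 0 < β ≤ 1. Let S = {L, H}, let P : S → PMF(S) be the kernel with P(L) = α·(point mass at H) + (1−α)·(point mass at L) and P(H) = β·(point mass at L) + (1−β)·(point mass at H), and define the policy g : S × ℕ → ℕ by g(H, m) = adjust(m, K) and g(L, m) = adjust(m, K − 1). Consider the kernel κ on S × ℕ given by κ(s, m) = (P s).map (fun s' => (s', g(s, m))). Then κ has a unique invariant PMF λ; the marginal of λ on the mass coordinate assigns probability α/(α+β) to m = K and probability β/(α+β) to m = K − 1 (and zero to every other mass); the expected mass is K −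 β/(α+β); and, with f(H) = K and f(L) = 0, the expected intensity is ∑_{(s,m)} λ(s,m)·f(s) = (α/(α+β))·K. -/
/-- The kernel on `Bool × ℕ` induced by the two-state trainer process `P`
(`L = false`, `H = true`) and the agent policy that moves the mass one step toward
`K` in state `H` and one step toward `K − 1` in state `L`. -/
noncomputable def policyKernel (P : Bool → PMF Bool) (K : ℕ) : Bool × ℕ → PMF (Bool × ℕ) :=
  fun q => (P q.1).map
    (fun s' => (s', if q.1 then adjust q.2 K else adjust q.2 (K - 1)))


open ENNReal

lemma adjust_eq_above {n d m : ℕ} (hdm : d < m) (h : adjust n d = m) : n = m + 1 := by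
  unfold adjust at h; split_ifs at h <;> omega

lemma adjust_eq_below {n d m : ℕ} (hmd : m < d) (h : adjust n d = m) : n + 1 = m := by
  unfold adjust at h; split_ifs at h <;> omega

lemma tsum_prod_bool (f : Bool × ℕ → ℝ≥0∞) :
    ∑' x : Bool × ℕ, f x = ∑' n, (f (true, n) + f (false, n)) := by
  rw [ENNReal.tsum_prod', tsum_bool, ← ENNReal.tsum_add]
  exact tsum_congr fun n => add_comm _ _

lemma adjust_self (d : ℕ) : adjust d d = d := by simp [adjust]
lemma adjust_lt {m d : ℕ} (h : m < d) : adjust m d = m + 1 := by simp [adjust, h]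
lemma adjust_gt {m d : ℕ} (h : d < m) : adjust m d = m - 1 := by
  simp [adjust, h, Nat.lt_asymm h]

lemma map_pair_apply (p : PMF Bool) (c : ℕ) (x : Bool × ℕ) :
    (p.map (fun s' => (s', c))) x = if x.2 = c then p x.1 else 0 := by
  obtain ⟨s, m⟩ := x
  rw [PMF.map_apply, tsum_bool]
  cases s <;> simp [Prod.ext_iff]

lemma policyKernel_apply (P : Bool → PMF Bool) (K : ℕ) (q x : Bool × ℕ) :
    policyKernel P K q x
      = if x.2 = (if q.1 then adjust q.2 K else adjust q.2 (K - 1)) then P q.1 x.1 else 0 :=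
  map_pair_apply _ _ _

lemma P_sum (p : PMF Bool) : p true + p false = 1 := by
  have := p.tsum_coe
  rwa [tsum_bool, add_comm] at this

section main
variable {K : ℕ} (hK : 1 ≤ K)
    {α β : ℝ} (hα0 : 0 < α) (hα1 : α ≤ 1) (hβ0 : 0 < β) (hβ1 : β ≤ 1)
    {P : Bool → PMF Bool}

-- the invariant density
noncomputable def dens (P : Bool → PMF Bool) (K : ℕ) (α β : ℝ) : Bool × ℕ → ℝ≥0∞ :=
  fun x => if x.2 = K then ENNReal.ofReal (α / (α + β)) * P true x.1
    else if x.2 = K - 1 then ENNReal.ofReal (β / (α + β)) * P false x.1 else 0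

def S4 (K : ℕ) : Finset (Bool × ℕ) := {(true, K), (false, K), (true, K - 1), (false, K - 1)}

lemma sum_S4 {M : Type*} [AddCommMonoid M] (hK : 1 ≤ K) (F : Bool × ℕ → M) :
    ∑ x ∈ S4 K, F x = F (true, K) + F (false, K) + F (true, K - 1) + F (false, K - 1) := by
  have hne : K - 1 ≠ K := by omega
  rw [S4]
  rw [Finset.sum_insert (by simp [hne.symm]), Finset.sum_insert (by simp [hne.symm]),
    Finset.sum_insert (by simp), Finset.sum_singleton]
  simp [add_assoc]

lemma dens_zero (hK : 1 ≤ K) {x : Bool × ℕ} (hx : x ∉ S4 K) : dens P K α β x = 0 := by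
  obtain ⟨s, m⟩ := x
  simp only [S4, Finset.mem_insert, Finset.mem_singleton, Prod.mk.injEq, not_or] at hx
  have h1 : m ≠ K := by cases s <;> tauto
  have h2 : m ≠ K - 1 := by cases s <;> tauto
  simp [dens, h1, h2]

lemma dens_sum (hK : 1 ≤ K) (hαβ : α + β ≠ 0) (hα : 0 ≤ α) (hβ : 0 ≤ β) :
    ∑ x ∈ S4 K, dens P K α β x = 1 := by
  have hne : K - 1 ≠ K := by omega
  rw [sum_S4 hK]
  simp only [dens, hne, if_true, if_false, ite_true, ite_false, if_neg hne]
  rw [add_assoc, ← mul_add, P_sum, ← mul_add, P_sum, mul_one, mul_one,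
    ← ENNReal.ofReal_add (by positivity) (by positivity),
    ← add_div, div_self hαβ, ENNReal.ofReal_one]

noncomputable def lamPMF (P : Bool → PMF Bool) (K : ℕ) (α β : ℝ) (hK : 1 ≤ K)
    (hαβ : α + β ≠ 0) (hα : 0 ≤ α) (hβ : 0 ≤ β) : PMF (Bool × ℕ) :=
  PMF.ofFinset (dens P K α β) (S4 K) (dens_sum hK hαβ hα hβ) (fun _ hx => dens_zero hK hx)

end main

lemma lamPMF_apply {K : ℕ} {α β : ℝ} {P : Bool → PMF Bool} (hK : 1 ≤ K)
    (hαβ : α + β ≠ 0) (hα : 0 ≤ α) (hβ : 0 ≤ β) (x : Bool × ℕ) :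
    lamPMF P K α β hK hαβ hα hβ x = dens P K α β x := rfl

section inv
variable {K : ℕ} {α β : ℝ} {P : Bool → PMF Bool}

lemma lam_invariant (hK : 1 ≤ K) (hαβ : α + β ≠ 0) (hα : 0 ≤ α) (hβ : 0 ≤ β)
    (eq1 : ENNReal.ofReal (α/(α+β)) * P true true
        + ENNReal.ofReal (β/(α+β)) * P false true = ENNReal.ofReal (α/(α+β)))
    (eq2 : ENNReal.ofReal (α/(α+β)) * P true false
        + ENNReal.ofReal (β/(α+β)) * P false false = ENNReal.ofReal (β/(α+β))) :
    (lamPMF P K α β hK hαβ hα hβ).bind (policyKernel P K) = lamPMF P K α β hK hαβ hα hβ := by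
  have hne : K - 1 ≠ K := by omega
  have hadj1 : adjust K K = K := adjust_self K
  have hadj2 : adjust K (K-1) = K - 1 := by rw [adjust_gt (by omega)]
  have hadj3 : adjust (K-1) K = K := by rw [adjust_lt (by omega)]; omega
  have hadj4 : adjust (K-1) (K-1) = K - 1 := adjust_self _
  apply PMF.ext
  intro x
  rw [PMF.bind_apply, tsum_eq_sum (s := S4 K)
    (fun y hy => by rw [lamPMF_apply, dens_zero hK hy, zero_mul]), sum_S4 hK]
  simp only [lamPMF_apply, policyKernel_apply, hadj1, hadj2, hadj3, hadj4]
  obtain ⟨s, m⟩ := x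
  simp only [dens, Bool.false_eq_true, if_true, if_false, ite_true, ite_false, hne, if_neg hne]
  by_cases hm : m = K
  · subst hm
    simp only [if_pos rfl, if_neg hne.symm, mul_zero, add_zero, zero_add, if_neg hne]
    rw [← add_mul, eq1]; simp
  · by_cases hm' : m = K - 1
    · subst hm'
      simp only [if_pos rfl, if_neg hne, mul_zero, add_zero, zero_add]
      rw [← add_mul, eq2]; simp
    · simp [hm, hm']
end inv

section uniq
variable {K : ℕ} {α β : ℝ} {P : Bool → PMF Bool}

lemma lam_unique (hK : 1 ≤ K) (hαβ : α + β ≠ 0) (hα : 0 ≤ α) (hβ : 0 ≤ β)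
    (hα1 : α ≤ 1) (hβ1 : β ≤ 1)
    (hLH : P false true = ENNReal.ofReal α)
    (hHH : P true true = ENNReal.ofReal (1 - β))
    (lam' : PMF (Bool × ℕ)) (hinv : lam'.bind (policyKernel P K) = lam') :
    lam' = lamPMF P K α β hK hαβ hα hβ := by
  have key : ∀ s m, lam' (s, m)
      = ∑' x : Bool × ℕ, lam' x *
          (if m = (if x.1 then adjust x.2 K else adjust x.2 (K-1)) then P x.1 s else 0) := by
    intro s m
    conv_lhs => rw [← hinv]
    rw [PMF.bind_apply]
    exact tsum_congr fun x => by rw [policyKernel_apply]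
  set T : ℕ → ℝ≥0∞ := fun m => lam' (true, m) + lam' (false, m) with hT
  have PsumP : ∀ t, P t true + P t false = 1 := fun t => P_sum (P t)
  have stepHigh : ∀ m, K < m → ∀ s, lam' (s, m)
      = lam' (true, m+1) * P true s + lam' (false, m+1) * P false s := by
    intro m hm s
    rw [key s m, tsum_eq_sum (s := ({(true, m+1), (false, m+1)} : Finset (Bool × ℕ)))
      (fun y hy => by
        obtain ⟨t, n⟩ := y
        simp only [Finset.mem_insert, Finset.mem_singleton, Prod.mk.injEq, not_or] at hy
        have hn : n ≠ m + 1 := by cases t <;> tauto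
        have hne : m ≠ (if t then adjust n K else adjust n (K-1)) := by
          cases t
          · exact fun hc => hn (adjust_eq_above (show K-1 < m by omega) (by simpa using hc.symm))
          · exact fun hc => hn (adjust_eq_above hm (by simpa using hc.symm))
        simp [hne])]
    rw [Finset.sum_insert (by simp), Finset.sum_singleton]
    have h1 : adjust (m+1) K = m := by rw [adjust_gt (by omega)]; omega
    have h2 : adjust (m+1) (K-1) = m := by rw [adjust_gt (by omega)]; omega
    simp [h1, h2]
  have stepTHigh : ∀ m, K < m → T m = T (m+1) := by
    intro m hm
    simp only [hT]
    rw [stepHigh m hm true, stepHigh m hm false,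
      add_add_add_comm, ← mul_add, ← mul_add, PsumP, PsumP, mul_one, mul_one]
  have Tsum : ∑' m, T m = 1 := by
    have h := lam'.tsum_coe
    rw [tsum_prod_bool] at h
    exact h
  have Thigh : ∀ m, K < m → T m = 0 := by
    have hshift : ∀ j : ℕ, T (K + 1 + j) = T (K + 1) := by
      intro j; induction j with
      | zero => rfl
      | succ j ih => rw [show K+1+(j+1) = (K+1+j)+1 by ring, ← stepTHigh _ (by omega), ih]
    have hzero : T (K + 1) = 0 := by
      by_contra hc
      have htop : ∑' j : ℕ, T (K + 1 + j) = ⊤ := by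
        rw [tsum_congr hshift]
        exact ENNReal.tsum_const_eq_top_of_ne_zero hc
      have hle : ∑' j : ℕ, T (K + 1 + j) ≤ ∑' m, T m :=
        ENNReal.tsum_comp_le_tsum_of_injective (fun a b h => by omega) T
      rw [htop, Tsum] at hle
      exact absurd hle (by simp)
    intro m hm
    rw [show m = K + 1 + (m - K - 1) by omega, hshift, hzero]
  have lamzero0 : 1 < K → ∀ s, lam' (s, 0) = 0 := by
    intro hK2 s
    rw [key s 0]
    convert tsum_zero with x
    obtain ⟨t, n⟩ := x
    have hne : (0:ℕ) ≠ (if t then adjust n K else adjust n (K-1)) := by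
      cases t
      · exact fun hc => by have := adjust_eq_below (show (0:ℕ) < K-1 by omega) (by simpa using hc.symm); omega
      · exact fun hc => by have := adjust_eq_below (show (0:ℕ) < K by omega) (by simpa using hc.symm); omega
    simp [hne]
  have stepLow : ∀ m, 0 < m → m < K - 1 → ∀ s, lam' (s, m)
      = lam' (true, m-1) * P true s + lam' (false, m-1) * P false s := by
    intro m hm0 hm s
    rw [key s m, tsum_eq_sum (s := ({(true, m-1), (false, m-1)} : Finset (Bool × ℕ)))
      (fun y hy => by
        obtain ⟨t, n⟩ := y
        simp only [Finset.mem_insert, Finset.mem_singleton, Prod.mk.injEq, not_or] at hy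
        have hn : n ≠ m - 1 := by cases t <;> tauto
        have hne : m ≠ (if t then adjust n K else adjust n (K-1)) := by
          cases t
          · exact fun hc => by have := adjust_eq_below (show m < K-1 from hm) (by simpa using hc.symm); omega
          · exact fun hc => by have := adjust_eq_below (show m < K by omega) (by simpa using hc.symm); omega
        simp [hne])]
    rw [Finset.sum_insert (by simp), Finset.sum_singleton]
    have h1 : adjust (m-1) K = m := by rw [adjust_lt (by omega)]; omega
    have h2 : adjust (m-1) (K-1) = m := by rw [adjust_lt (by omega)]; omega
    simp [h1, h2]
  have Tlow : ∀ m, m < K - 1 → T m = 0 := by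
    intro m
    induction m with
    | zero =>
      intro h
      simp only [hT]
      rw [lamzero0 (by omega) true, lamzero0 (by omega) false, add_zero]
    | succ m ih =>
      intro h
      have hstep : T (m+1) = T m := by
        simp only [hT]
        rw [stepLow (m+1) (by omega) h true, stepLow (m+1) (by omega) h false]
        simp only [Nat.add_sub_cancel]
        rw [add_add_add_comm, ← mul_add, ← mul_add, PsumP, PsumP, mul_one, mul_one]
      rw [hstep, ih (by omega)]
  have offzero : ∀ s m, m ≠ K → m ≠ K - 1 → lam' (s, m) = 0 := by
    intro s m h1 h2
    have hle : lam' (s, m) ≤ T m := by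
      cases s
      · exact le_add_self
      · exact le_self_add
    have hz : T m = 0 := by
      rcases (by omega : m < K - 1 ∨ K < m) with h | h
      exacts [Tlow m h, Thigh m h]
    exact le_antisymm (hz ▸ hle) zero_le
  have hS4out : ∀ y ∉ S4 K, lam' y = 0 := by
    intro y hy
    obtain ⟨t, n⟩ := y
    simp only [S4, Finset.mem_insert, Finset.mem_singleton, Prod.mk.injEq, not_or] at hy
    exact offzero t n (by cases t <;> tauto) (by cases t <;> tauto)
  have hadj1 : adjust K K = K := adjust_self K
  have hadj2 : adjust K (K-1) = K-1 := by rw [adjust_gt (by omega)]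
  have hadj3 : adjust (K-1) K = K := by rw [adjust_lt (by omega)]; omega
  have hadj4 : adjust (K-1) (K-1) = K-1 := adjust_self _
  have hne : K - 1 ≠ K := by omega
  set H := lam' (true, K) + lam' (true, K-1) with hH
  set L := lam' (false, K) + lam' (false, K-1) with hL
  have eqK : ∀ s, lam' (s, K) = H * P true s := by
    intro s
    rw [key s K, tsum_eq_sum (s := S4 K) (fun y hy => by rw [hS4out y hy, zero_mul]),
      sum_S4 hK]
    simp only [hadj1, hadj2, hadj3, hadj4, ite_true, ite_false, Bool.false_eq_true]
    rw [if_neg hne.symm, mul_zero, mul_zero, add_zero, add_zero, hH, add_mul]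
  have eqK1 : ∀ s, lam' (s, K-1) = L * P false s := by
    intro s
    rw [key s (K-1), tsum_eq_sum (s := S4 K) (fun y hy => by rw [hS4out y hy, zero_mul]),
      sum_S4 hK]
    simp only [hadj1, hadj2, hadj3, hadj4, ite_true, ite_false, Bool.false_eq_true]
    rw [if_neg hne, mul_zero, mul_zero, zero_add, add_zero, hL, add_mul]
  have HL1 : H + L = 1 := by
    have h := lam'.tsum_coe
    rw [tsum_eq_sum (s := S4 K) hS4out, sum_S4 hK] at h
    rw [hH, hL, ← h]; ring
  have eqH : H = H * P true true + L * P false true := by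
    rw [← eqK true, ← eqK1 true]
  have hHtop : H ≠ ⊤ := ne_top_of_le_ne_top one_ne_top (le_of_le_of_eq le_self_add HL1)
  have hLtop : L ≠ ⊤ := ne_top_of_le_ne_top one_ne_top (le_of_le_of_eq le_add_self HL1)
  set Hr := H.toReal with hHr
  set Lr := L.toReal with hLr
  have hr1 : Hr + Lr = 1 := by
    rw [hHr, hLr, ← ENNReal.toReal_add hHtop hLtop, HL1, ENNReal.toReal_one]
  have hr2 : Hr = Hr * (1 - β) + Lr * α := by
    calc Hr = (H * P true true + L * P false true).toReal := by rw [← eqH]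
    _ = Hr * (1-β) + Lr * α := by
        rw [hHH, hLH, ENNReal.toReal_add (ENNReal.mul_ne_top hHtop ENNReal.ofReal_ne_top)
          (ENNReal.mul_ne_top hLtop ENNReal.ofReal_ne_top), ENNReal.toReal_mul,
          ENNReal.toReal_mul, ENNReal.toReal_ofReal (by linarith),
          ENNReal.toReal_ofReal (by linarith)]
  have h3 : Hr * β = Lr * α := by linear_combination hr2
  have hHval : Hr = α / (α + β) := by
    rw [eq_div_iff hαβ]
    linear_combination h3 + α * hr1
  have hLval : Lr = β / (α + β) := by
    have : Lr = 1 - Hr := by linarith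
    rw [this, hHval]
    field_simp
    ring
  have hHeq : H = ENNReal.ofReal (α/(α+β)) := by
    rw [← hHval, hHr, ENNReal.ofReal_toReal hHtop]
  have hLeq : L = ENNReal.ofReal (β/(α+β)) := by
    rw [← hLval, hLr, ENNReal.ofReal_toReal hLtop]
  apply PMF.ext
  intro x
  obtain ⟨s, m⟩ := x
  rw [lamPMF_apply]
  by_cases hm : m = K
  · subst hm
    rw [eqK s, hHeq]
    simp [dens]
  · by_cases hm' : m = K - 1
    · subst hm'
      rw [eqK1 s, hLeq]
      simp [dens, hne]
    · rw [offzero s m hm hm']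
      simp [dens, hm, hm']
end uniq

/-- long-run dynamics of the implementation in part (ii) of
Proposition 2: the induced kernel has a unique invariant PMF, whose mass marginal
puts probability `α/(α+β)` on `K` and `β/(α+β)` on `K − 1` (zero elsewhere); the
expected mass is `K − β/(α+β)` and, with intensities `K` in `H` and `0` in `L`,
the expected intensity is `(α/(α+β))·K`. -/
theorem patient_implementation (K : ℕ) (hK : 1 ≤ K)
    (α β : ℝ) (hα0 : 0 < α) (hα1 : α ≤ 1) (hβ0 : 0 < β) (hβ1 : β ≤ 1)
    (P : Bool → PMF Bool)
    (hLH : P false true = ENNReal.ofReal α)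
    (hLL : P false false = ENNReal.ofReal (1 - α))
    (hHL : P true false = ENNReal.ofReal β)
    (hHH : P true true = ENNReal.ofReal (1 - β)) :
    ∃ lam : PMF (Bool × ℕ),
      lam.bind (policyKernel P K) = lam ∧
      (∀ lam' : PMF (Bool × ℕ), lam'.bind (policyKernel P K) = lam' → lam' = lam) ∧
      (lam.map Prod.snd) K = ENNReal.ofReal (α / (α + β)) ∧
      (lam.map Prod.snd) (K - 1) = ENNReal.ofReal (β / (α + β)) ∧
      (∀ m : ℕ, m ≠ K → m ≠ K - 1 → (lam.map Prod.snd) m = 0) ∧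
      (∑' q : Bool × ℕ, (lam q).toReal * (q.2 : ℝ) = (K : ℝ) - β / (α + β)) ∧
      (∑' q : Bool × ℕ, (lam q).toReal * (if q.1 then (K : ℝ) else 0)
        = (α / (α + β)) * K) := by
  have hαβ : α + β ≠ 0 := by positivity
  have hα : (0:ℝ) ≤ α := hα0.le
  have hβ : (0:ℝ) ≤ β := hβ0.le
  have hne : K - 1 ≠ K := by omega
  set lam := lamPMF P K α β hK hαβ hα hβ with hlam
  have eq1 : ENNReal.ofReal (α/(α+β)) * P true true
      + ENNReal.ofReal (β/(α+β)) * P false true = ENNReal.ofReal (α/(α+β)) := by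
    rw [hHH, hLH, ← ENNReal.ofReal_mul (by positivity),
      ← ENNReal.ofReal_mul (by positivity),
      ← ENNReal.ofReal_add (mul_nonneg (by positivity) (by linarith)) (by positivity)]
    congr 1
    field_simp
    ring
  have eq2 : ENNReal.ofReal (α/(α+β)) * P true false
      + ENNReal.ofReal (β/(α+β)) * P false false = ENNReal.ofReal (β/(α+β)) := by
    rw [hHL, hLL, ← ENNReal.ofReal_mul (by positivity),
      ← ENNReal.ofReal_mul (by positivity),
      ← ENNReal.ofReal_add (by positivity) (mul_nonneg (by positivity) (by linarith))]
    congr 1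
    field_simp
    ring
  -- values of lam
  have v1 : lam (true, K) = ENNReal.ofReal (α/(α+β)) * ENNReal.ofReal (1-β) := by
    rw [hlam, lamPMF_apply, ← hHH]; simp [dens]
  have v2 : lam (false, K) = ENNReal.ofReal (α/(α+β)) * ENNReal.ofReal β := by
    rw [hlam, lamPMF_apply, ← hHL]; simp [dens]
  have v3 : lam (true, K-1) = ENNReal.ofReal (β/(α+β)) * ENNReal.ofReal α := by
    rw [hlam, lamPMF_apply, ← hLH]; simp [dens, hne]
  have v4 : lam (false, K-1) = ENNReal.ofReal (β/(α+β)) * ENNReal.ofReal (1-α) := by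
    rw [hlam, lamPMF_apply, ← hLL]; simp [dens, hne]
  have vz : ∀ x : Bool × ℕ, x ∉ S4 K → lam x = 0 := by
    intro x hx
    rw [hlam, lamPMF_apply, dens_zero hK hx]
  refine ⟨lam, lam_invariant hK hαβ hα hβ eq1 eq2,
    fun lam' h => lam_unique hK hαβ hα hβ hα1 hβ1 hLH hHH lam' h, ?_, ?_, ?_, ?_, ?_⟩
  · rw [PMF.map_apply, tsum_eq_sum (s := S4 K)
      (fun y hy => by rw [vz y hy]; split <;> rfl), sum_S4 hK]
    rw [if_pos rfl, if_pos rfl, if_neg (by exact fun h => hne h.symm),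
      if_neg (by exact fun h => hne h.symm), add_zero, add_zero, v1, v2,
      ← mul_add, ← ENNReal.ofReal_add (by linarith) hβ]
    norm_num
  · rw [PMF.map_apply, tsum_eq_sum (s := S4 K)
      (fun y hy => by rw [vz y hy]; split <;> rfl), sum_S4 hK]
    rw [if_pos rfl, if_pos rfl, if_neg hne, if_neg hne, zero_add, zero_add, v3, v4,
      ← mul_add, ← ENNReal.ofReal_add hα (by linarith)]
    norm_num
  · intro m hm1 hm2
    rw [PMF.map_apply]
    convert tsum_zero with x
    split
    · next h =>
      apply vz
      obtain ⟨t, n⟩ := x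
      simp only [S4, Finset.mem_insert, Finset.mem_singleton, Prod.mk.injEq, not_or]
      cases t <;> simp_all <;> omega
    · rfl
  · rw [tsum_eq_sum (s := S4 K) (fun y hy => by rw [vz y hy]; simp), sum_S4 hK]
    simp only [v1, v2, v3, v4, ENNReal.toReal_mul,
      ENNReal.toReal_ofReal (show (0:ℝ) ≤ α/(α+β) by positivity),
      ENNReal.toReal_ofReal (show (0:ℝ) ≤ β/(α+β) by positivity),
      ENNReal.toReal_ofReal (show (0:ℝ) ≤ 1-β by linarith),
      ENNReal.toReal_ofReal (show (0:ℝ) ≤ 1-α by linarith),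
      ENNReal.toReal_ofReal hα, ENNReal.toReal_ofReal hβ]
    rw [Nat.cast_sub hK]
    push_cast
    field_simp
    ring
  · rw [tsum_eq_sum (s := S4 K) (fun y hy => by rw [vz y hy]; simp), sum_S4 hK]
    simp only [v1, v2, v3, v4, ENNReal.toReal_mul, ite_true, ite_false,
      Bool.false_eq_true, mul_zero,
      ENNReal.toReal_ofReal (show (0:ℝ) ≤ α/(α+β) by positivity),
      ENNReal.toReal_ofReal (show (0:ℝ) ≤ β/(α+β) by positivity),
      ENNReal.toReal_ofReal (show (0:ℝ) ≤ 1-β by linarith),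
      ENNReal.toReal_ofReal (show (0:ℝ) ≤ 1-α by linarith),
      ENNReal.toReal_ofReal hα, ENNReal.toReal_ofReal hβ]
    field_simp
    ring
end
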